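/- Fix ε > 0. For each i with 1 ≤ i ≤ ⌊n/2⌋ and n > 2/ε, ℙ[ R_i(b) < ⌊n/2⌋(1 − e^{−1} − ε) ] ≤ exp( −(ε⌊n/2⌋ − 1)² / (2n) ). -/

import Mathlib

open Finset Real ProbabilityTheory MeasureTheory
open scoped BigOperators

/-!
Changing one value `b j₀` moves only the entries of row `i` at `j₀` and `j₀ - i`, so `R_i` has
bounded differences with constant `2` and McDiarmid's inequality applies; it follows from
Hoeffding's lemma by averaging out one coordinate at a time.

For the mean, a value `0 < v < n / 2` is absent from row `i` only if `b (j + i) ∉ {b j ± v}` for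
every `j`. Reading `b` along `0, …, n - 1`, each of the `n - i` positions `j ≥ i` then has at most
`n - 2` admissible values, so `v` is absent with probability at most `(1 - 2 / n) ^ (n - i) ≤ e⁻¹`,
and `𝔼 R_i ≥ (⌊n/2⌋ - 1)(1 - e⁻¹)`. The tail bound is used with deviation `ε⌊n/2⌋ - (1 - e⁻¹)`,
which dominates `|ε⌊n/2⌋ - 1|` unless the threshold is at most `1`, when the event is empty.
-/

/-- The `n`-cyclic absolute value of `d ∈ ℤ_n`. -/
def cycAbs (n : ℕ) (d : ZMod n) : ℕ := min d.val (-d).val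

/-- The entry `T_b(i,j) = |b(j) − b(j+i)|_n` of the matrix `T_b`. -/
def Tb (n : ℕ) (b : ZMod n → ZMod n) (i : ℕ) (j : ZMod n) : ℕ :=
  cycAbs n (b j - b (j + (i : ZMod n)))

/-- `R_i(b)`: the number of distinct values among the entries of row `i` of `T_b`. -/
def Rrow (n : ℕ) [NeZero n] (b : ZMod n → ZMod n) (i : ℕ) : ℕ :=
  (Finset.univ.image (fun j : ZMod n => Tb n b i j)).card

variable {ι A : Type*}

lemma integral_uniformOfFintype [Fintype A] [Nonempty A] [MeasurableSpace A]
    [MeasurableSingletonClass A] (f : A → ℝ) :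
    ∫ a, f a ∂(PMF.uniformOfFintype A).toMeasure = 𝔼 a, f a := by
  rw [PMF.integral_eq_sum, Fintype.expect_eq_sum_div_card, Finset.sum_div]
  simp [div_eq_inv_mul]

lemma expect_exp_mul_le [Fintype A] [Nonempty A] (Y : A → ℝ)
    (hY : 𝔼 a, Y a = 0) {c : ℝ} (hc : ∀ a b, Y a - Y b ≤ c) (l : ℝ) :
    𝔼 a, exp (l * Y a) ≤ exp (c ^ 2 * l ^ 2 / 8) := by
  let _ : MeasurableSpace A := ⊤
  have : MeasurableSingletonClass A := ⟨fun _ => trivial⟩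
  obtain ⟨a₀, -, hmin⟩ := exists_min_image univ Y univ_nonempty
  have hmem : ∀ᵐ a ∂(PMF.uniformOfFintype A).toMeasure, Y a ∈ Set.Icc (Y a₀) (Y a₀ + c) :=
    ae_of_all _ fun a => ⟨hmin a (mem_univ a), by linarith [hc a a₀]⟩
  have h := (hasSubgaussianMGF_of_mem_Icc_of_integral_eq_zero
    (measurable_of_countable Y).aemeasurable hmem
    (by rw [integral_uniformOfFintype, hY])).mgf_le l
  rw [mgf, integral_uniformOfFintype] at h
  convert h using 2
  simp only [add_sub_cancel_left, NNReal.coe_pow, NNReal.coe_div, coe_nnnorm, norm_eq_abs,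
    NNReal.coe_ofNat, div_pow, sq_abs]
  ring

def HasBoundedDifferences (f : (ι → A) → ℝ) (c : ℝ) : Prop :=
  ∀ k x y, (∀ j, j ≠ k → x j = y j) → f x - f y ≤ c

lemma expect_fin_cons [Fintype A] {m : ℕ} (F : (Fin (m + 1) → A) → ℝ) :
    𝔼 x, F x = 𝔼 a, 𝔼 y, F (Fin.cons a y) := by
  rw [← Fintype.expect_equiv (Fin.consEquiv fun _ => A) (fun p => F (Fin.cons p.1 p.2)) F
    fun _ => rfl, ← univ_product_univ]
  exact expect_product' univ univ fun a y => F (Fin.cons a y)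

namespace HasBoundedDifferences

variable {c : ℝ}

lemma fin_cons {m : ℕ} {f : (Fin (m + 1) → A) → ℝ} (hf : HasBoundedDifferences f c) (a : A) :
    HasBoundedDifferences (fun y => f (Fin.cons a y)) c := by
  intro k y y' h
  refine hf k.succ _ _ fun j hj => ?_
  cases j using Fin.cases with
  | zero => rfl
  | succ j => exact h j (by rintro rfl; exact hj rfl)

lemma expect_exp_le_fin [Fintype A] [Nonempty A] {m : ℕ} {f : (Fin m → A) → ℝ}
    (hf : HasBoundedDifferences f c) (l : ℝ) :
    𝔼 x, exp (l * (𝔼 z, f z - f x)) ≤ exp (m * (c ^ 2 * l ^ 2 / 8)) := by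
  induction m with
  | zero => simp
  | succ m ih =>
    set g := fun a => 𝔼 y, f (Fin.cons a y)
    have hg : ∀ a b, (𝔼 a', g a' - g a) - (𝔼 a', g a' - g b) ≤ c := fun a b => by
      simp only [g, sub_sub_sub_cancel_left, ← expect_sub_distrib]
      exact expect_le univ_nonempty fun y _ => hf 0 _ _ fun j hj => by
        obtain ⟨j, rfl⟩ := Fin.exists_succ_eq.2 hj; rfl
    calc 𝔼 x, exp (l * (𝔼 z, f z - f x))
        = 𝔼 a, exp (l * (𝔼 a', g a' - g a)) * 𝔼 y, exp (l * (g a - f (Fin.cons a y))) := by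
          rw [expect_fin_cons, expect_fin_cons f]
          refine expect_congr rfl fun a _ => ?_
          rw [mul_expect]
          refine expect_congr rfl fun y _ => ?_
          rw [← exp_add]; simp only [g]; ring_nf
      _ ≤ 𝔼 a, exp (l * (𝔼 a', g a' - g a)) * exp (m * (c ^ 2 * l ^ 2 / 8)) :=
          expect_le_expect fun a _ => by gcongr; exact ih (hf.fin_cons a)
      _ ≤ exp (c ^ 2 * l ^ 2 / 8) * exp (m * (c ^ 2 * l ^ 2 / 8)) := by
          rw [← expect_mul]
          gcongr
          exact expect_exp_mul_le _ (by simp [expect_sub_distrib]) hg l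
      _ = exp ((m + 1 : ℕ) * (c ^ 2 * l ^ 2 / 8)) := by
          rw [← exp_add]; push_cast; ring_nf

lemma comp_arrowCongr {ι' : Type*} {f : (ι → A) → ℝ} (hf : HasBoundedDifferences f c)
    (e : ι ≃ ι') : HasBoundedDifferences (fun y : ι' → A => f (y ∘ e)) c :=
  fun k y y' h => hf (e.symm k) _ _ fun j hj => h (e j) (by rintro rfl; simp at hj)

lemma expect_exp_le [Fintype ι] [DecidableEq ι] [Fintype A] [Nonempty A]
    {f : (ι → A) → ℝ} (hf : HasBoundedDifferences f c) (l : ℝ) :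
    𝔼 x, exp (l * (𝔼 z, f z - f x)) ≤ exp (Fintype.card ι * (c ^ 2 * l ^ 2 / 8)) := by
  let e : (ι → A) ≃ (Fin (Fintype.card ι) → A) := (Fintype.equivFin ι).arrowCongr (.refl A)
  have he : ∀ x, f x = f (e x ∘ Fintype.equivFin ι) := fun x => by simp [e, Function.comp_def]
  have hmean : 𝔼 z, f z = 𝔼 y, f (y ∘ Fintype.equivFin ι) := Fintype.expect_equiv e _ _ he
  rw [hmean, Fintype.expect_equiv e _ (fun y => exp (l * (𝔼 y', f (y' ∘ Fintype.equivFin ι) -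
    f (y ∘ Fintype.equivFin ι)))) fun x => by rw [he x]]
  exact (hf.comp_arrowCongr _).expect_exp_le_fin l

theorem card_filter_le_expect_sub_div_card_le [Fintype ι] [DecidableEq ι] [Fintype A] [Nonempty A]
    {f : (ι → A) → ℝ} (hf : HasBoundedDifferences f c) {s : ℝ} (hs : 0 ≤ s) :
    (#{x | f x ≤ 𝔼 z, f z - s} : ℝ) / Fintype.card (ι → A)
      ≤ exp (-2 * s ^ 2 / (Fintype.card ι * c ^ 2)) := by
  set D : ℝ := Fintype.card ι * c ^ 2
  set l := 4 * s / D
  have hl : 0 ≤ l := by positivity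
  calc (#{x | f x ≤ 𝔼 z, f z - s} : ℝ) / Fintype.card (ι → A)
      = 𝔼 x, if f x ≤ 𝔼 z, f z - s then 1 else 0 := by
        rw [natCast_card_filter, ← Fintype.expect_eq_sum_div_card]
    _ ≤ 𝔼 x, exp (-(l * s)) * exp (l * (𝔼 z, f z - f x)) := by
        refine expect_le_expect fun x _ => ?_
        rw [← exp_add]
        split_ifs with hx
        · exact one_le_exp (by nlinarith)
        · positivity
    _ ≤ exp (-(l * s)) * exp (Fintype.card ι * (c ^ 2 * l ^ 2 / 8)) := by
        rw [← mul_expect]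
        gcongr
        exact hf.expect_exp_le l
    _ = exp (-2 * s ^ 2 / D) := by
        rw [← exp_add]
        congr 1
        rcases eq_or_ne D 0 with hD | hD
        · simp [l, hD]
        · simp only [l]; field_simp; ring

end HasBoundedDifferences

lemma card_filter_lag_avoiding_le [Fintype A] [DecidableEq A] (F : A → Finset A)
    {k : ℕ} (hF : ∀ a, k ≤ #(F a)) {d : ℕ} (hd : 0 < d) (N : ℕ) :
    #{x : Fin (d + N) → A | ∀ s t : Fin (d + N), (s : ℕ) + d = t → x t ∉ F (x s)}
      ≤ Fintype.card A ^ d * (Fintype.card A - k) ^ N := by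
  induction N with
  | zero => exact (card_filter_le _ _).trans (by simp)
  | succ N ih =>
    set S : Finset (Fin (d + (N + 1)) → A) := {x |
      ∀ s t : Fin (d + (N + 1)), (s : ℕ) + d = t → x t ∉ F (x s)}
    have hinit : S.image Fin.init ⊆ ({y | ∀ s t : Fin (d + N), (s : ℕ) + d = t → y t ∉ F (y s)} :
        Finset (Fin (d + N) → A)) := by
      simp only [subset_iff, mem_image, mem_filter_univ, S]
      rintro _ ⟨x, hx, rfl⟩ s t hst
      exact hx s.castSucc t.castSucc hst
    have hfibre : ∀ y : Fin (d + N) → A, #{x ∈ S | Fin.init x = y} ≤ Fintype.card A - k := by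
      intro y
      calc #{x ∈ S | Fin.init x = y}
          ≤ #(univ \ F (y ⟨N, by omega⟩)) := by
            refine card_le_card_of_injOn (fun x => x (Fin.last _)) (fun x hx => ?_) ?_
            · simp only [coe_filter, Set.mem_ofPred_eq, S, mem_filter_univ] at hx
              obtain ⟨hx, rfl⟩ := hx
              simpa [Fin.init] using hx ⟨N, by omega⟩ (Fin.last _) (by simp; omega)
            · intro x hx x' hx' hlast
              simp only [coe_filter, Set.mem_ofPred_eq] at hx hx'
              rw [← Fin.snoc_init_self x, ← Fin.snoc_init_self x', hx.2, hx'.2]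
              exact congrArg _ hlast
        _ ≤ Fintype.card A - k := by
            rw [card_sdiff_of_subset (subset_univ _), card_univ]
            exact Nat.sub_le_sub_left (hF _) _
    calc #S ≤ (Fintype.card A - k) * #(S.image Fin.init) :=
          card_le_mul_card_image _ _ fun y _ => hfibre y
      _ ≤ (Fintype.card A - k) * (Fintype.card A ^ d * (Fintype.card A - k) ^ N) := by
          gcongr; exact (card_le_card hinit).trans ih
      _ = Fintype.card A ^ d * (Fintype.card A - k) ^ (N + 1) := by ring

lemma cycAbs_neg (n : ℕ) (d : ZMod n) : cycAbs n (-d) = cycAbs n d := by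
  simp [cycAbs, min_comm]

lemma cycAbs_natCast {n : ℕ} [NeZero n] {v : ℕ} (hv : 2 * v ≤ n) : cycAbs n v = v := by
  rcases Nat.eq_zero_or_pos v with rfl | hv0
  · simp [cycAbs]
  have hval : (v : ZMod n).val = v := ZMod.val_cast_of_lt (by omega)
  have hne : (v : ZMod n) ≠ 0 := fun h => by rw [h, ZMod.val_zero] at hval; omega
  rw [cycAbs, ZMod.neg_val, if_neg hne, hval]
  omega

lemma card_filter_notMem_image_Tb_le {n i v : ℕ} [NeZero n] (hi0 : 0 < i) (hi : i ≤ n)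
    (hv0 : 0 < v) (hv : 2 * v < n) :
    #{b : ZMod n → ZMod n | v ∉ univ.image (Tb n b i)} ≤ n ^ i * (n - 2) ^ (n - i) := by
  obtain ⟨N, rfl⟩ := Nat.exists_eq_add_of_le hi
  set F : ZMod (i + N) → Finset (ZMod (i + N)) := fun a => {a - v, a + v}
  have hF : ∀ a, 2 ≤ #(F a) := fun a => by
    refine (card_pair fun h => ?_).ge
    have : ((2 * v : ℕ) : ZMod (i + N)) = 0 := by push_cast; linear_combination -h
    rw [ZMod.natCast_eq_zero_iff] at this
    exact absurd (Nat.le_of_dvd (by omega) this) (by omega)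
  calc #{b : ZMod (i + N) → ZMod (i + N) | v ∉ univ.image (Tb (i + N) b i)}
      ≤ #{x : Fin (i + N) → ZMod (i + N) |
          ∀ s t : Fin (i + N), (s : ℕ) + i = t → x t ∉ F (x s)} := by
        refine card_le_card_of_injOn (fun b t => b (t : ℕ)) (fun b hb => ?_) fun b _ b' _ h => ?_
        · simp only [coe_filter, mem_image, mem_univ, true_and, not_exists,
            Set.mem_ofPred_eq] at hb ⊢
          intro s t hst hmem
          rw [← hst, Nat.cast_add] at hmem
          apply hb s
          simp only [F, mem_insert, mem_singleton] at hmem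
          rcases hmem with h | h <;> rw [Tb, h]
          · rw [sub_sub_cancel, cycAbs_natCast hv.le]
          · rw [sub_add_cancel_left, cycAbs_neg, cycAbs_natCast hv.le]
        · funext j
          simpa using congrFun h ⟨j.val, ZMod.val_lt j⟩
    _ ≤ Fintype.card (ZMod (i + N)) ^ i * (Fintype.card (ZMod (i + N)) - 2) ^ N :=
        card_filter_lag_avoiding_le F hF hi0 N
    _ = (i + N) ^ i * (i + N - 2) ^ (i + N - i) := by simp [ZMod.card]

lemma natCast_pow_mul_sub_two_pow_le {n i : ℕ} (hn : 0 < n) (hi : 2 * i ≤ n) :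
    ((n ^ i * (n - 2) ^ (n - i) : ℕ) : ℝ) ≤ exp (-1) * n ^ n := by
  have hnR : (0 : ℝ) < n := by exact_mod_cast hn
  have hsub : ((n - 2 : ℕ) : ℝ) ≤ n * exp (-2 / n) := by
    rcases le_or_gt 2 n with h | h
    · calc ((n - 2 : ℕ) : ℝ) = n * (-2 / n + 1) := by push_cast [h]; field_simp; ring
        _ ≤ n * exp (-2 / n) := by gcongr; exact add_one_le_exp _
    · rw [Nat.sub_eq_zero_of_le h.le, Nat.cast_zero]; positivity
  have hexp : exp (-2 / n) ^ (n - i) ≤ exp (-1) := by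
    have : (n : ℝ) ≤ 2 * ((n - i : ℕ) : ℝ) := by exact_mod_cast (by omega : n ≤ 2 * (n - i))
    rw [← exp_nat_mul, exp_le_exp,
      show ((n - i : ℕ) : ℝ) * (-2 / n) = -(2 * (n - i : ℕ) / n) by ring, neg_le_neg_iff,
      le_div_iff₀ hnR]
    linarith
  calc ((n ^ i * (n - 2) ^ (n - i) : ℕ) : ℝ) = n ^ i * ((n - 2 : ℕ) : ℝ) ^ (n - i) := by
        push_cast; rfl
    _ ≤ n ^ i * (n * exp (-2 / n)) ^ (n - i) := by gcongr
    _ = n ^ n * exp (-2 / n) ^ (n - i) := by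
        rw [mul_pow, ← mul_assoc, ← pow_add, Nat.add_sub_cancel' (by omega)]
    _ ≤ n ^ n * exp (-1) := by gcongr
    _ = exp (-1) * n ^ n := mul_comm _ _

lemma le_expect_Rrow {n i : ℕ} [NeZero n] (hi0 : 0 < i) (hi : i ≤ n / 2) :
    (((n / 2 : ℕ) : ℝ) - 1) * (1 - exp (-1)) ≤ 𝔼 b, (Rrow n b i : ℝ) := by
  set V := Ico 1 ((n + 1) / 2)
  have hcard : Fintype.card (ZMod n → ZMod n) = n ^ n := by simp [ZMod.card]
  have hV : ((n / 2 : ℕ) : ℝ) - 1 ≤ #V := by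
    have : n / 2 ≤ #V + 1 := by simp only [V, Nat.card_Ico]; omega
    have : ((n / 2 : ℕ) : ℝ) ≤ #V + 1 := by exact_mod_cast this
    linarith
  have hgood : ∀ v ∈ V,
      (1 - exp (-1)) * n ^ n ≤ (#{b : ZMod n → ZMod n | v ∈ univ.image (Tb n b i)} : ℝ) := by
    intro v hv
    simp only [V, mem_Ico] at hv
    have hbad := natCast_pow_mul_sub_two_pow_le (NeZero.pos n) (by omega : 2 * i ≤ n)
    have hbad' : (#{b : ZMod n → ZMod n | v ∉ univ.image (Tb n b i)} : ℝ) ≤ exp (-1) * n ^ n :=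
      le_trans (by exact_mod_cast card_filter_notMem_image_Tb_le hi0 (by omega) hv.1 (by omega))
        hbad
    have hsplit := card_filter_add_card_filter_not (s := univ)
      (p := fun b : ZMod n → ZMod n => v ∈ univ.image (Tb n b i))
    rw [card_univ, hcard] at hsplit
    have : (#{b : ZMod n → ZMod n | v ∈ univ.image (Tb n b i)} : ℝ)
        + #{b : ZMod n → ZMod n | v ∉ univ.image (Tb n b i)} = n ^ n := by exact_mod_cast hsplit
    linarith
  have hdouble : ∑ v ∈ V, #{b : ZMod n → ZMod n | v ∈ univ.image (Tb n b i)}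
      ≤ ∑ b, Rrow n b i := by
    refine (sum_card_bipartiteAbove_eq_sum_card_bipartiteBelow
      (fun b v => v ∈ univ.image (Tb n b i))).symm.le.trans ?_
    exact sum_le_sum fun b _ => card_le_card fun v hv => (mem_filter.1 hv).2
  have hexp : 0 ≤ 1 - exp (-1) := by linarith [exp_lt_one_iff.2 (by norm_num : (-1 : ℝ) < 0)]
  have hnn : (0 : ℝ) < n ^ n := by have := NeZero.pos n; positivity
  calc (((n / 2 : ℕ) : ℝ) - 1) * (1 - exp (-1)) ≤ #V * (1 - exp (-1)) := by gcongr
    _ = (∑ v ∈ V, (1 - exp (-1)) * n ^ n) / n ^ n := by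
        rw [sum_const, nsmul_eq_mul]; field_simp
    _ ≤ (∑ v ∈ V, (#{b : ZMod n → ZMod n | v ∈ univ.image (Tb n b i)} : ℝ)) / n ^ n := by
        gcongr with v hv; exact hgood v hv
    _ ≤ (∑ b, (Rrow n b i : ℝ)) / n ^ n := by gcongr; exact_mod_cast hdouble
    _ = 𝔼 b, (Rrow n b i : ℝ) := by rw [Fintype.expect_eq_sum_div_card, hcard]; push_cast; rfl

lemma hasBoundedDifferences_Rrow (n i : ℕ) [NeZero n] :
    HasBoundedDifferences (fun b : ZMod n → ZMod n => (Rrow n b i : ℝ)) 2 := by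
  intro j₀ b b' h
  have hsub : univ.image (Tb n b i) ⊆
      univ.image (Tb n b' i) ∪ ({j₀, j₀ - (i : ZMod n)} : Finset (ZMod n)).image (Tb n b i) := by
    intro x hx
    obtain ⟨j, -, rfl⟩ := mem_image.1 hx
    by_cases hj : j = j₀ ∨ j = j₀ - i
    · exact mem_union_right _ (mem_image_of_mem _ (by simpa using hj))
    · push Not at hj
      refine mem_union_left _ (mem_image.2 ⟨j, mem_univ _, ?_⟩)
      rw [Tb, Tb, h j hj.1, h _ fun e => hj.2 (by rw [← e, add_sub_cancel_right])]
  have : (Rrow n b i : ℝ) ≤ Rrow n b' i + 2 := by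
    exact_mod_cast (card_le_card hsub).trans <| (card_union_le _ _).trans <|
      Nat.add_le_add_left (card_image_le.trans card_le_two) _
  simp only
  linarith

lemma abs_sub_one_le_sub_one_sub_exp_neg_one {ε n m : ℝ} (hε : 0 < ε) (hεn : 2 < ε * n)
    (hnm : n ≤ 2 * m + 1) (hm : 0 < m) (hthr : 1 < m * (1 - exp (-1) - ε)) :
    |ε * m - 1| ≤ ε * m - (1 - exp (-1)) := by
  have he1 := exp_neg_one_gt_d9
  have he2 := exp_neg_one_lt_d9
  have h1 : 2 < 2 * (ε * m) + ε := by nlinarith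
  have h2 : 1 + (1 - exp (-1)) ≤ 2 * (ε * m) := by
    by_contra h
    have h3 : exp (-1) < ε := by linarith
    nlinarith [mul_lt_mul_of_pos_left h3 hm]
  rw [abs_le]
  constructor <;> linarith

/-- For `ε > 0`, `n > 2/ε` and `1 ≤ i ≤ ⌊n/2⌋`, the probability that row `i` has fewer
than `⌊n/2⌋(1 − e^{−1} − ε)` distinct values is at most `exp(−(ε⌊n/2⌋ − 1)²/(2n))`. -/
theorem prob_Rrow_small (n : ℕ) [NeZero n] (ε : ℝ) (hε : 0 < ε) (hn : (n : ℝ) > 2 / ε)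
    (i : ℕ) (hi1 : 1 ≤ i) (hi2 : i ≤ n / 2) :
    ((Finset.univ.filter
        (fun b : ZMod n → ZMod n =>
          (Rrow n b i : ℝ) < ((n / 2 : ℕ) : ℝ) * (1 - Real.exp (-1) - ε))).card : ℝ)
        / (n : ℝ) ^ n
      ≤ Real.exp (-(ε * ((n / 2 : ℕ) : ℝ) - 1) ^ 2 / (2 * n)) := by
  set m := n / 2
  have hm : 1 ≤ m := hi1.trans hi2
  by_cases hthr : (m : ℝ) * (1 - exp (-1) - ε) ≤ 1
  · rw [filter_eq_empty_iff.2 fun b _ => not_lt.2 <| hthr.trans <| by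
      exact_mod_cast card_pos.2 (univ_nonempty.image _), card_empty, Nat.cast_zero, zero_div]
    positivity
  set s := ε * m - (1 - exp (-1))
  have hs := abs_sub_one_le_sub_one_sub_exp_neg_one (m := m) hε
    (by rwa [gt_iff_lt, div_lt_iff₀ hε, mul_comm] at hn)
    (by exact_mod_cast (by omega : n ≤ 2 * m + 1))
    (by exact_mod_cast hm) (not_le.1 hthr)
  have hmean := le_expect_Rrow hi1 hi2
  calc _ ≤ (#{b : ZMod n → ZMod n | (Rrow n b i : ℝ) ≤ 𝔼 b, (Rrow n b i : ℝ) - s} : ℝ)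
        / Fintype.card (ZMod n → ZMod n) := by
        rw [Fintype.card_fun, ZMod.card, Nat.cast_pow]
        gcongr with b
        intro hb
        linarith
    _ ≤ exp (-2 * s ^ 2 / (Fintype.card (ZMod n) * 2 ^ 2)) :=
        (hasBoundedDifferences_Rrow n i).card_filter_le_expect_sub_div_card_le
          ((abs_nonneg _).trans hs)
    _ ≤ exp (-(ε * m - 1) ^ 2 / (2 * n)) := by
        rw [ZMod.card, exp_le_exp, show -2 * s ^ 2 / (n * 2 ^ 2) = -s ^ 2 / (2 * n) by ring]
        exact div_le_div_of_nonneg_right (neg_le_neg (sq_le_sq' (abs_le.1 hs).1 (abs_le.1 hs).2))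
          (by positivity)
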